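/- For every d > 0, the function F_d^N is continuous on ℝ \ Π_d^N and strictly increasing on each connected component of ℝ \ Π_d^N; moreover F_d^N(λ) → -∞ as λ → -∞, and for every μ ∈ Π_d^N one has F_d^N(λ) → +∞ as λ → μ from the left and F_d^N(λ) → -∞ as λ → μ from the right. -/

import Mathlib

/-- The set `Π_d^N = { (π(2k-1)/d)² : k ∈ ℕ, k ≥ 1 }`. -/
noncomputable def PiN (d : ℝ) : Set ℝ :=
  {x | ∃ k : ℕ, 1 ≤ k ∧ x = (Real.pi * (2 * (k : ℝ) - 1) / d) ^ 2}

/-- The function `F_d^N`. -/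
noncomputable def FN (d lam : ℝ) : ℝ :=
  if 0 < lam then 2 * Real.sqrt lam * Real.tan (d * Real.sqrt lam / 2)
  else if lam = 0 then 0
  else -2 * Real.sqrt (-lam) * Real.tanh (d * Real.sqrt (-lam) / 2)

open Real Filter Set

namespace FNaux

noncomputable def gpos (d lam : ℝ) : ℝ :=
  2 * Real.sqrt lam * Real.tan (d * Real.sqrt lam / 2)

noncomputable def gneg (d lam : ℝ) : ℝ :=
  -2 * Real.sqrt (-lam) * Real.tanh (d * Real.sqrt (-lam) / 2)

lemma FN_of_pos {d lam : ℝ} (h : 0 < lam) : FN d lam = gpos d lam := by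
  simp [FN, gpos, h]

lemma FN_zero {d : ℝ} : FN d 0 = 0 := by simp [FN]

lemma FN_of_neg {d lam : ℝ} (h : lam < 0) : FN d lam = gneg d lam := by
  simp [FN, gneg, not_lt.2 h.le, h.ne]

lemma FN_eq_gneg_of_nonpos {d lam : ℝ} (h : lam ≤ 0) : FN d lam = gneg d lam := by
  rcases h.lt_or_eq with h | rfl
  · exact FN_of_neg h
  · simp [FN, gneg]

lemma FN_eq_gpos_of_nonneg {d lam : ℝ} (h : 0 ≤ lam) : FN d lam = gpos d lam := by
  rcases h.lt_or_eq with h | rfl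
  · exact FN_of_pos h
  · simp [FN, gpos]

/-! ### tanh facts -/

lemma hasDerivAt_tanh (x : ℝ) : HasDerivAt Real.tanh (1 - Real.tanh x ^ 2) x := by
  have hc : Real.cosh x ≠ 0 := (Real.cosh_pos x).ne'
  have h := (Real.hasDerivAt_sinh x).div (Real.hasDerivAt_cosh x) hc
  have heq : Real.tanh = fun y => Real.sinh y / Real.cosh y :=
    funext fun y => Real.tanh_eq_sinh_div_cosh y
  rw [heq]
  refine h.congr_deriv (Eq.symm ?_)
  show 1 - (Real.sinh x / Real.cosh x) ^ 2
      = (Real.cosh x * Real.cosh x - Real.sinh x * Real.sinh x) / Real.cosh x ^ 2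
  have h2 := Real.cosh_sq_sub_sinh_sq x
  field_simp

lemma tanh_pos' {x : ℝ} (h : 0 < x) : 0 < Real.tanh x := by
  rw [Real.tanh_eq_sinh_div_cosh]
  exact div_pos (by rwa [Real.sinh_pos_iff]) (Real.cosh_pos x)

lemma one_sub_tanh_sq_pos (x : ℝ) : 0 < 1 - Real.tanh x ^ 2 := by
  have hc : (0:ℝ) < Real.cosh x := Real.cosh_pos x
  rw [Real.tanh_eq_sinh_div_cosh, div_pow, sub_pos, div_lt_one (by positivity)]
  nlinarith [Real.cosh_sq x]

lemma tanh_strictMono : StrictMono Real.tanh :=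
  strictMono_of_deriv_pos fun x => by
    rw [(hasDerivAt_tanh x).deriv]; exact one_sub_tanh_sq_pos x

lemma continuous_tanh : Continuous Real.tanh := by
  have heq : Real.tanh = fun y => Real.sinh y / Real.cosh y :=
    funext fun y => Real.tanh_eq_sinh_div_cosh y
  rw [heq]
  exact Real.continuous_sinh.div Real.continuous_cosh fun x => (Real.cosh_pos x).ne'

/-! ### the set `PiN` -/

lemma PiN_pos {d : ℝ} (hd : 0 < d) {x : ℝ} (hx : x ∈ PiN d) : 0 < x := by
  obtain ⟨k, hk, rfl⟩ := hx
  have h1 : (0:ℝ) < 2 * (k:ℝ) - 1 := by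
    have : (1:ℝ) ≤ (k:ℝ) := by exact_mod_cast hk
    linarith
  have hpi := Real.pi_pos
  positivity

lemma mem_PiN_iff {d : ℝ} (hd : 0 < d) {x : ℝ} (hx : 0 < x) :
    x ∈ PiN d ↔ Real.cos (d * Real.sqrt x / 2) = 0 := by
  constructor
  · rintro ⟨k, hk, rfl⟩
    have h1 : (0:ℝ) < 2 * (k:ℝ) - 1 := by
      have : (1:ℝ) ≤ (k:ℝ) := by exact_mod_cast hk
      linarith
    have hpi := Real.pi_pos
    have hs : Real.sqrt ((π * (2 * (k:ℝ) - 1) / d) ^ 2) = π * (2 * (k:ℝ) - 1) / d :=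
      Real.sqrt_sq (by positivity)
    rw [hs, Real.cos_eq_zero_iff]
    refine ⟨(k : ℤ) - 1, ?_⟩
    push_cast
    field_simp
    ring
  · intro h
    rw [Real.cos_eq_zero_iff] at h
    obtain ⟨n, hn⟩ := h
    have hsx : 0 < Real.sqrt x := Real.sqrt_pos.2 hx
    have h2 : Real.sqrt x = (2 * (n:ℝ) + 1) * π / d := by
      field_simp at hn ⊢
      linarith
    have hpi := Real.pi_pos
    have hn0 : 0 ≤ n := by
      by_contra hneg
      push_neg at hneg
      have hle : (n:ℝ) ≤ -1 := by exact_mod_cast (by omega : n ≤ -1)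
      have hlt : (2 * (n:ℝ) + 1) * π / d < 0 := by
        apply div_neg_of_neg_of_pos _ hd
        nlinarith
      rw [h2] at hsx
      linarith
    refine ⟨n.toNat + 1, Nat.le_add_left 1 n.toNat, ?_⟩
    have hcast : ((n.toNat : ℝ)) = (n:ℝ) := by exact_mod_cast Int.toNat_of_nonneg hn0
    push_cast [hcast]
    rw [← Real.sq_sqrt hx.le, h2]
    ring

lemma Iic_subset_compl {d : ℝ} (hd : 0 < d) : Iic (0:ℝ) ⊆ (PiN d)ᶜ := fun y hy hmem =>
  absurd (PiN_pos hd hmem) (not_lt.2 hy)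

/-! ### continuity -/

lemma continuous_gneg (d : ℝ) : Continuous (gneg d) := by
  unfold gneg
  have h1 : Continuous fun lam : ℝ => Real.sqrt (-lam) :=
    Real.continuous_sqrt.comp continuous_neg
  exact (continuous_const.mul h1).mul
    (continuous_tanh.comp ((continuous_const.mul h1).div_const 2))

lemma continuousAt_gpos {d x : ℝ} (hc : Real.cos (d * Real.sqrt x / 2) ≠ 0) :
    ContinuousAt (gpos d) x := by
  have h1 : ContinuousAt (fun lam : ℝ => d * Real.sqrt lam / 2) x :=
    ((continuous_const.mul Real.continuous_sqrt).div_const 2).continuousAt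
  have h2 : ContinuousAt Real.tan (d * Real.sqrt x / 2) := Real.continuousAt_tan.2 hc
  exact ((continuous_const.mul Real.continuous_sqrt).continuousAt).mul (ContinuousAt.comp (f := fun lam : ℝ => d * Real.sqrt lam / 2) h2 h1)

lemma continuousAt_FN_neg {d x : ℝ} (hx : x < 0) : ContinuousAt (FN d) x := by
  refine ((continuous_gneg d).continuousAt).congr ?_
  filter_upwards [Iio_mem_nhds hx] with y hy
  exact (FN_of_neg hy).symm

lemma continuousAt_FN_pos {d x : ℝ} (hx : 0 < x)
    (hc : Real.cos (d * Real.sqrt x / 2) ≠ 0) : ContinuousAt (FN d) x := by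
  refine (continuousAt_gpos hc).congr ?_
  filter_upwards [Ioi_mem_nhds hx] with y hy
  exact (FN_of_pos hy).symm

lemma continuousAt_FN_zero {d : ℝ} : ContinuousAt (FN d) 0 := by
  rw [continuousAt_iff_continuous_left_right]
  constructor
  · exact ((continuous_gneg d).continuousAt).continuousWithinAt.congr
      (fun y hy => FN_eq_gneg_of_nonpos hy) (FN_eq_gneg_of_nonpos le_rfl)
  · have hc : Real.cos (d * Real.sqrt 0 / 2) ≠ 0 := by
      simp
    exact (continuousAt_gpos hc).continuousWithinAt.congr
      (fun y hy => FN_eq_gpos_of_nonneg hy) (FN_eq_gpos_of_nonneg le_rfl)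

lemma continuousOn_FN {d : ℝ} (hd : 0 < d) : ContinuousOn (FN d) (PiN d)ᶜ := by
  intro x hx
  rcases lt_trichotomy x 0 with h | rfl | h
  · exact (continuousAt_FN_neg h).continuousWithinAt
  · exact continuousAt_FN_zero.continuousWithinAt
  · have hc : Real.cos (d * Real.sqrt x / 2) ≠ 0 := fun h0 =>
      hx ((mem_PiN_iff hd h).2 h0)
    exact (continuousAt_FN_pos h hc).continuousWithinAt

/-! ### derivatives -/

lemma hasDerivAt_sqrt_neg {x : ℝ} (hx : x < 0) :
    HasDerivAt (fun lam : ℝ => Real.sqrt (-lam)) (-(1 / (2 * Real.sqrt (-x)))) x := by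
  have h1 : HasDerivAt (fun lam : ℝ => -lam) (-1) x := (hasDerivAt_id x).neg
  have h2 := (Real.hasDerivAt_sqrt (neg_ne_zero.2 hx.ne)).comp x h1
  refine h2.congr_deriv (Eq.symm ?_)
  ring

lemma hasDerivAt_FN_neg {d x : ℝ} (hd : 0 < d) (hx : x < 0) :
    HasDerivAt (FN d)
      (Real.tanh (d * Real.sqrt (-x) / 2) / Real.sqrt (-x)
        + d / 2 * (1 - Real.tanh (d * Real.sqrt (-x) / 2) ^ 2)) x := by
  have ht : 0 < Real.sqrt (-x) := Real.sqrt_pos.2 (by linarith)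
  have h1 := hasDerivAt_sqrt_neg hx
  have h2 : HasDerivAt (fun lam : ℝ => d * Real.sqrt (-lam) / 2)
      (d * (-(1 / (2 * Real.sqrt (-x)))) / 2) x := (h1.const_mul d).div_const 2
  have h3 := (hasDerivAt_tanh (d * Real.sqrt (-x) / 2)).comp x h2
  have h4 := (h1.const_mul (-2)).mul h3
  have h5 : HasDerivAt (gneg d)
      (Real.tanh (d * Real.sqrt (-x) / 2) / Real.sqrt (-x)
        + d / 2 * (1 - Real.tanh (d * Real.sqrt (-x) / 2) ^ 2)) x := by
    refine h4.congr_deriv (Eq.symm ?_)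
    simp only [Function.comp_apply]
    have hne : Real.sqrt (-x) ≠ 0 := ht.ne'
    field_simp
  have heq : FN d =ᶠ[nhds x] gneg d := by
    filter_upwards [Iio_mem_nhds hx] with y hy
    exact FN_of_neg hy
  exact h5.congr_of_eventuallyEq heq

lemma derivFN_neg_pos {d x : ℝ} (hd : 0 < d) (hx : x < 0) : 0 < deriv (FN d) x := by
  rw [(hasDerivAt_FN_neg hd hx).deriv]
  have ht : 0 < Real.sqrt (-x) := Real.sqrt_pos.2 (by linarith)
  have h1 : 0 < Real.tanh (d * Real.sqrt (-x) / 2) := tanh_pos' (by positivity)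
  have h2 := one_sub_tanh_sq_pos (d * Real.sqrt (-x) / 2)
  positivity

lemma hasDerivAt_FN_pos {d x : ℝ} (hd : 0 < d) (hx : 0 < x)
    (hc : Real.cos (d * Real.sqrt x / 2) ≠ 0) :
    HasDerivAt (FN d)
      (Real.tan (d * Real.sqrt x / 2) / Real.sqrt x
        + d / 2 * (1 / Real.cos (d * Real.sqrt x / 2) ^ 2)) x := by
  have ht : 0 < Real.sqrt x := Real.sqrt_pos.2 hx
  have h1 := Real.hasDerivAt_sqrt hx.ne'
  have h2 : HasDerivAt (fun lam : ℝ => d * Real.sqrt lam / 2)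
      (d * (1 / (2 * Real.sqrt x)) / 2) x := (h1.const_mul d).div_const 2
  have h3 := (Real.hasDerivAt_tan hc).comp x h2
  have h4 := (h1.const_mul 2).mul h3
  have h5 : HasDerivAt (gpos d)
      (Real.tan (d * Real.sqrt x / 2) / Real.sqrt x
        + d / 2 * (1 / Real.cos (d * Real.sqrt x / 2) ^ 2)) x := by
    refine h4.congr_deriv (Eq.symm ?_)
    simp only [Function.comp_apply]
    have hne : Real.sqrt x ≠ 0 := ht.ne'
    have hcne : Real.cos (d * Real.sqrt x / 2) ≠ 0 := hc
    field_simp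
  have heq : FN d =ᶠ[nhds x] gpos d := by
    filter_upwards [Ioi_mem_nhds hx] with y hy
    exact FN_of_pos hy
  exact h5.congr_of_eventuallyEq heq

lemma sin_cos_add_pos {u : ℝ} (hu : 0 < u) : 0 < Real.sin u * Real.cos u + u := by
  have h : Real.sin (2 * u) = 2 * Real.sin u * Real.cos u := Real.sin_two_mul u
  rcases le_or_gt (2 * u) 1 with hle | hlt
  · have : 0 < Real.sin (2 * u) :=
      Real.sin_pos_of_pos_of_lt_pi (by linarith) (by linarith [Real.pi_gt_three])
    nlinarith
  · have : -1 ≤ Real.sin (2 * u) := Real.neg_one_le_sin _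
    nlinarith

lemma derivFN_pos_pos {d x : ℝ} (hd : 0 < d) (hx : 0 < x)
    (hc : Real.cos (d * Real.sqrt x / 2) ≠ 0) : 0 < deriv (FN d) x := by
  rw [(hasDerivAt_FN_pos hd hx hc).deriv]
  have ht : 0 < Real.sqrt x := Real.sqrt_pos.2 hx
  set u := d * Real.sqrt x / 2 with hu
  have hu0 : 0 < u := by positivity
  have key : 0 < Real.sin u * Real.cos u + u := sin_cos_add_pos hu0
  have htan : Real.tan u = Real.sin u / Real.cos u := Real.tan_eq_sin_div_cos u
  have hcos2 : 0 < Real.cos u ^ 2 := by positivity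
  have hexpr : Real.tan u / Real.sqrt x + d / 2 * (1 / Real.cos u ^ 2)
      = (Real.sin u * Real.cos u + u) / (Real.sqrt x * Real.cos u ^ 2) := by
    rw [htan, hu]
    field_simp
  rw [hexpr]
  positivity

/-! ### strict monotonicity -/

lemma strictMonoOn_FN_Iic {d : ℝ} (hd : 0 < d) : StrictMonoOn (FN d) (Iic 0) := by
  apply strictMonoOn_of_deriv_pos (convex_Iic 0)
    ((continuousOn_FN hd).mono (Iic_subset_compl hd))
  intro x hx
  rw [interior_Iic] at hx
  exact derivFN_neg_pos hd hx

lemma strictMonoOn_FN_Icc {d a b : ℝ} (hd : 0 < d) (ha : 0 ≤ a)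
    (h : Icc a b ⊆ (PiN d)ᶜ) : StrictMonoOn (FN d) (Icc a b) := by
  apply strictMonoOn_of_deriv_pos (convex_Icc a b) ((continuousOn_FN hd).mono h)
  intro x hx
  rw [interior_Icc] at hx
  have hx0 : 0 < x := lt_of_le_of_lt ha hx.1
  have hxc : x ∈ (PiN d)ᶜ := h ⟨hx.1.le, hx.2.le⟩
  exact derivFN_pos_pos hd hx0 fun h0 => hxc ((mem_PiN_iff hd hx0).2 h0)

lemma FN_lt_FN {d a b : ℝ} (hd : 0 < d) (hab : a < b) (h : Icc a b ⊆ (PiN d)ᶜ) :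
    FN d a < FN d b := by
  rcases le_or_gt b 0 with hb | hb
  · exact strictMonoOn_FN_Iic hd (mem_Iic.2 (le_trans hab.le hb)) (mem_Iic.2 hb) hab
  · rcases le_or_gt 0 a with ha | ha
    · exact strictMonoOn_FN_Icc hd ha h ⟨le_rfl, hab.le⟩ ⟨hab.le, le_rfl⟩ hab
    · have h1 : FN d a < FN d 0 := strictMonoOn_FN_Iic hd (mem_Iic.2 ha.le) (mem_Iic.2 le_rfl) ha
      have h2 : FN d 0 < FN d b := by
        refine strictMonoOn_FN_Icc hd le_rfl (fun y hy => h ⟨le_trans ha.le hy.1, hy.2⟩)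
          ⟨le_rfl, hb.le⟩ ⟨hb.le, le_rfl⟩ hb
      linarith

/-! ### limit at -∞ -/

lemma tendsto_sqrt_atTop : Tendsto Real.sqrt atTop atTop :=
  tendsto_atTop_atTop_of_monotone (fun _ _ h => Real.sqrt_le_sqrt h)
    fun b => ⟨b ^ 2, by rw [Real.sqrt_sq_eq_abs]; exact le_abs_self b⟩

lemma tendsto_FN_atBot {d : ℝ} (hd : 0 < d) : Tendsto (FN d) atBot atBot := by
  have h1 : Tendsto (fun lam : ℝ => Real.sqrt (-lam)) atBot atTop :=
    tendsto_sqrt_atTop.comp tendsto_neg_atBot_atTop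
  have hc : (-2 : ℝ) * Real.tanh (d / 2) < 0 := by
    have := tanh_pos' (show 0 < d / 2 by positivity)
    nlinarith
  have h2 : Tendsto (fun lam : ℝ => -2 * Real.tanh (d / 2) * Real.sqrt (-lam)) atBot atBot :=
    Tendsto.neg_mul_atTop hc tendsto_const_nhds h1
  apply tendsto_atBot_mono' _ _ h2
  filter_upwards [eventually_le_atBot (-1 : ℝ)] with lam hlam
  have hneg : lam < 0 := lt_of_le_of_lt hlam (by norm_num)
  rw [FN_of_neg hneg]
  have hs1 : (1:ℝ) ≤ Real.sqrt (-lam) := by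
    rw [show (1:ℝ) = Real.sqrt 1 by simp]
    exact Real.sqrt_le_sqrt (by linarith)
  have hs0 : 0 < Real.sqrt (-lam) := by linarith
  have hmono : Real.tanh (d / 2) ≤ Real.tanh (d * Real.sqrt (-lam) / 2) := by
    apply tanh_strictMono.monotone
    rw [div_le_div_iff_of_pos_right (by norm_num : (0:ℝ) < 2)] at *
    nlinarith
  have htp : 0 < Real.tanh (d / 2) := tanh_pos' (by positivity)
  have := mul_le_mul_of_nonneg_left hmono (by positivity : (0:ℝ) ≤ 2 * Real.sqrt (-lam))
  unfold gneg
  nlinarith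

/-! ### behaviour at the poles -/

lemma tendsto_tan_shift_atTop (n : ℕ) :
    Tendsto Real.tan (nhdsWithin (π / 2 + n * π) (Iio (π / 2 + n * π))) atTop := by
  have hshift : Tendsto (fun x : ℝ => x - n * π)
      (nhdsWithin (π / 2 + n * π) (Iio (π / 2 + n * π))) (nhdsWithin (π / 2) (Iio (π / 2))) := by
    apply tendsto_nhdsWithin_of_tendsto_nhds_of_eventually_within
    · have h := ((continuous_sub_right ((n:ℝ) * π)).tendsto (π / 2 + n * π)).mono_left
        (nhdsWithin_le_nhds (s := Iio (π / 2 + n * π)))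
      simpa using h
    · filter_upwards [self_mem_nhdsWithin] with x hx
      simp only [mem_Iio] at hx ⊢
      linarith
  have h := Real.tendsto_tan_pi_div_two.comp hshift
  refine h.congr fun x => ?_
  exact Real.tan_periodic.sub_nat_mul_eq n

lemma tendsto_tan_shift_atBot (n : ℕ) :
    Tendsto Real.tan (nhdsWithin (-(π / 2) + n * π) (Ioi (-(π / 2) + n * π))) atBot := by
  have hshift : Tendsto (fun x : ℝ => x - n * π)
      (nhdsWithin (-(π / 2) + n * π) (Ioi (-(π / 2) + n * π)))
      (nhdsWithin (-(π / 2)) (Ioi (-(π / 2)))) := by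
    apply tendsto_nhdsWithin_of_tendsto_nhds_of_eventually_within
    · have h := ((continuous_sub_right ((n:ℝ) * π)).tendsto (-(π / 2) + n * π)).mono_left
        (nhdsWithin_le_nhds (s := Ioi (-(π / 2) + n * π)))
      simpa using h
    · filter_upwards [self_mem_nhdsWithin] with x hx
      simp only [mem_Ioi] at hx ⊢
      linarith
  have h := Real.tendsto_tan_neg_pi_div_two.comp hshift
  refine h.congr fun x => ?_
  exact Real.tan_periodic.sub_nat_mul_eq n

end FNaux

open FNaux

/-- For every `d > 0`, the function `F_d^N` is continuous on `ℝ \ Π_d^N` and strictly increasing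
on each connected component of `ℝ \ Π_d^N`; moreover `F_d^N(λ) → -∞` as `λ → -∞`, and for every
`μ ∈ Π_d^N` one has `F_d^N(λ) → +∞` as `λ → μ⁻` and `F_d^N(λ) → -∞` as `λ → μ⁺`. -/
theorem stmt3 (d : ℝ) (hd : 0 < d) :
    ContinuousOn (FN d) (PiN d)ᶜ ∧
    (∀ x ∈ (PiN d)ᶜ, StrictMonoOn (FN d) (connectedComponentIn (PiN d)ᶜ x)) ∧
    Filter.Tendsto (FN d) Filter.atBot Filter.atBot ∧
    ∀ μ ∈ PiN d,
      Filter.Tendsto (FN d) (nhdsWithin μ (Set.Iio μ)) Filter.atTop ∧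
      Filter.Tendsto (FN d) (nhdsWithin μ (Set.Ioi μ)) Filter.atBot := by
  refine ⟨continuousOn_FN hd, ?_, tendsto_FN_atBot hd, ?_⟩
  · intro x hx a ha b hb hab
    have hsub := connectedComponentIn_subset (PiN d)ᶜ x
    have hoc : OrdConnected (connectedComponentIn (PiN d)ᶜ x) :=
      (isPreconnected_connectedComponentIn).ordConnected
    exact FN_lt_FN hd hab fun y hy => hsub (hoc.out ha hb hy)
  · rintro μ hμ
    obtain ⟨k, hk, hμeq⟩ := hμ
    have hpi := Real.pi_pos
    have h1 : (0:ℝ) < 2 * (k:ℝ) - 1 := by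
      have : (1:ℝ) ≤ (k:ℝ) := by exact_mod_cast hk
      linarith
    set r : ℝ := π * (2 * (k:ℝ) - 1) / d with hr
    have hrpos : 0 < r := by positivity
    have hμpos : 0 < μ := by rw [hμeq]; positivity
    have hsμ : Real.sqrt μ = r := by rw [hμeq]; exact Real.sqrt_sq hrpos.le
    have hu0 : d * Real.sqrt μ / 2 = π * (2 * (k:ℝ) - 1) / 2 := by
      rw [hsμ, hr]; field_simp
    -- the coefficient tends to a positive limit
    have hcoef_nhds : Tendsto (fun lam : ℝ => 2 * Real.sqrt lam) (nhds μ)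
        (nhds (2 * Real.sqrt μ)) :=
      (continuous_const.mul Real.continuous_sqrt).tendsto μ
    have hcoefpos : 0 < 2 * Real.sqrt μ := by rw [hsμ]; positivity
    constructor
    · -- left limit : +∞
      have hval : π / 2 + ((k - 1 : ℕ) : ℝ) * π = d * Real.sqrt μ / 2 := by
        have hc1 : ((k - 1 : ℕ) : ℝ) = (k:ℝ) - 1 := by
          rw [Nat.cast_sub hk]; norm_num
        rw [hu0, hc1]; ring
      have hmap : Tendsto (fun lam : ℝ => d * Real.sqrt lam / 2)
          (nhdsWithin μ (Iio μ)) (nhdsWithin (π / 2 + ((k - 1 : ℕ) : ℝ) * π)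
            (Iio (π / 2 + ((k - 1 : ℕ) : ℝ) * π))) := by
        rw [hval]
        apply tendsto_nhdsWithin_of_tendsto_nhds_of_eventually_within
        · exact (((continuous_const.mul Real.continuous_sqrt).div_const 2).tendsto μ).mono_left
            nhdsWithin_le_nhds
        · filter_upwards [Ioo_mem_nhdsLT_of_mem (show μ ∈ Ioc 0 μ from ⟨hμpos, le_rfl⟩)]
            with y hy
          have h2 : Real.sqrt y < Real.sqrt μ := Real.sqrt_lt_sqrt hy.1.le hy.2
          have h3 : d * Real.sqrt y < d * Real.sqrt μ := by nlinarith
          exact mem_Iio.2 (by linarith)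
      have htan : Tendsto (fun lam : ℝ => Real.tan (d * Real.sqrt lam / 2))
          (nhdsWithin μ (Iio μ)) atTop := (tendsto_tan_shift_atTop (k - 1)).comp hmap
      have hcoef : Tendsto (fun lam : ℝ => 2 * Real.sqrt lam) (nhdsWithin μ (Iio μ))
          (nhds (2 * Real.sqrt μ)) := hcoef_nhds.mono_left nhdsWithin_le_nhds
      have hmul := hcoef.pos_mul_atTop hcoefpos htan
      refine hmul.congr' ?_
      filter_upwards [Ioo_mem_nhdsLT_of_mem (show μ ∈ Ioc 0 μ from ⟨hμpos, le_rfl⟩)]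
        with y hy
      rw [FN_of_pos hy.1]; rfl
    · -- right limit : -∞
      have hval : -(π / 2) + ((k : ℕ) : ℝ) * π = d * Real.sqrt μ / 2 := by
        rw [hu0]; ring
      have hmap : Tendsto (fun lam : ℝ => d * Real.sqrt lam / 2)
          (nhdsWithin μ (Ioi μ)) (nhdsWithin (-(π / 2) + ((k : ℕ) : ℝ) * π)
            (Ioi (-(π / 2) + ((k : ℕ) : ℝ) * π))) := by
        rw [hval]
        apply tendsto_nhdsWithin_of_tendsto_nhds_of_eventually_within
        · exact (((continuous_const.mul Real.continuous_sqrt).div_const 2).tendsto μ).mono_left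
            nhdsWithin_le_nhds
        · filter_upwards [self_mem_nhdsWithin] with y hy
          have h2 : Real.sqrt μ < Real.sqrt y := Real.sqrt_lt_sqrt hμpos.le hy
          have h3 : d * Real.sqrt μ < d * Real.sqrt y := by nlinarith
          exact mem_Ioi.2 (by linarith)
      have htan : Tendsto (fun lam : ℝ => Real.tan (d * Real.sqrt lam / 2))
          (nhdsWithin μ (Ioi μ)) atBot := (tendsto_tan_shift_atBot k).comp hmap
      have hcoef : Tendsto (fun lam : ℝ => 2 * Real.sqrt lam) (nhdsWithin μ (Ioi μ))
          (nhds (2 * Real.sqrt μ)) := hcoef_nhds.mono_left nhdsWithin_le_nhds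
      have hmul := hcoef.pos_mul_atBot hcoefpos htan
      refine hmul.congr' ?_
      filter_upwards [self_mem_nhdsWithin] with y hy
      rw [FN_of_pos (lt_trans hμpos hy)]; rfl
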